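/- With notation as in the Alexander trick: if h sends every straight line segment contained in B to a concatenation of at most m straight line segments, then for every t ∈ (0,1], the map h_t sends every straight line segment contained in B to a concatenation of at most m+2 straight line segments. -/

import Mathlib

/-- `S` is a concatenation of at most `m` straight segments. -/
def IsPLOfAtMost (m : ℕ) (S : Set (EuclideanSpace ℝ (Fin 3))) : Prop :=
  ∃ k ≤ m, ∃ e : Fin k → EuclideanSpace ℝ (Fin 3) × EuclideanSpace ℝ (Fin 3),
    S = ⋃ i, segment ℝ (e i).1 (e i).2

/-!
`h_t` is the conjugate, under the homothety `s_t`, of the extension `F` of `h` by the identity,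
and affine maps preserve the number of straight pieces, so it suffices to treat `F`.
A segment `[a, b]` meeting the closed convex set `B` splits as `[a, c] ∪ [c, d] ∪ [d, b]` with
`[c, d] = [a, b] ∩ B`. `F` maps `[c, d]` to at most `m` pieces. On `[a, c]` it is the identity
except possibly at `c`, which is either `a` or a frontier point of `B` and hence fixed by `h`;
so `F` maps `[a, c]` onto the single segment `[F a, F c]`, and likewise for `[d, b]`.
-/

open Set

local notation "ℝ³" => EuclideanSpace ℝ (Fin 3)

namespace IsPLOfAtMost

theorem mono {m n : ℕ} {S : Set ℝ³} (hS : IsPLOfAtMost m S) (hmn : m ≤ n) :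
    IsPLOfAtMost n S := by
  obtain ⟨k, hk, e, rfl⟩ := hS
  exact ⟨k, hk.trans hmn, e, rfl⟩

theorem union {m n : ℕ} {S S' : Set ℝ³} (hS : IsPLOfAtMost m S) (hS' : IsPLOfAtMost n S') :
    IsPLOfAtMost (m + n) (S ∪ S') := by
  obtain ⟨k, hk, e, rfl⟩ := hS
  obtain ⟨l, hl, e', rfl⟩ := hS'
  refine ⟨k + l, by omega, Fin.append e e', ?_⟩
  ext x
  simp only [mem_union, mem_iUnion]
  constructor
  · rintro (⟨i, hi⟩ | ⟨j, hj⟩)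
    · exact ⟨Fin.castAdd l i, by rwa [Fin.append_left]⟩
    · exact ⟨Fin.natAdd k j, by rwa [Fin.append_right]⟩
  · rintro ⟨i, hi⟩
    induction i using Fin.addCases with
    | left i => exact Or.inl ⟨i, by rwa [Fin.append_left] at hi⟩
    | right j => exact Or.inr ⟨j, by rwa [Fin.append_right] at hi⟩

theorem image_affineMap {m : ℕ} {S : Set ℝ³} (hS : IsPLOfAtMost m S) (φ : ℝ³ →ᵃ[ℝ] ℝ³) :
    IsPLOfAtMost m (φ '' S) := by
  obtain ⟨k, hk, e, rfl⟩ := hS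
  refine ⟨k, hk, fun i => (φ (e i).1, φ (e i).2), ?_⟩
  simp only [image_iUnion, image_segment]

end IsPLOfAtMost

theorem isPLOfAtMost_image_segment_conj {n : ℕ} {F : ℝ³ → ℝ³}
    (hF : ∀ a b, IsPLOfAtMost n (F '' segment ℝ a b)) (φ : ℝ³ ≃ᵃ[ℝ] ℝ³) (a b : ℝ³) :
    IsPLOfAtMost n ((φ ∘ F ∘ φ.symm) '' segment ℝ a b) := by
  rw [image_comp, image_comp, ← AffineEquiv.coe_coe φ.symm, image_segment]
  exact (hF _ _).image_affineMap φ

theorem isPLOfAtMost_one_segment (a b : ℝ³) : IsPLOfAtMost 1 (segment ℝ a b) :=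
  ⟨1, le_rfl, fun _ => (a, b), (iUnion_const _).symm⟩

section Segment

variable {E : Type*} [AddCommGroup E] [Module ℝ E] [TopologicalSpace E] [IsTopologicalAddGroup E]
  [ContinuousSMul ℝ E]

theorem exists_first_mem_segment {T : Set E} (hT : IsClosed T) {a b : E}
    (hne : (segment ℝ a b ∩ T).Nonempty) :
    ∃ c ∈ T, segment ℝ a b = segment ℝ a c ∪ segment ℝ c b ∧
      ∀ x ∈ segment ℝ a c, x ≠ c → x ∉ T := by
  set f : ℝ →ᵃ[ℝ] E := AffineMap.lineMap a b
  have hf : ∀ {u v : ℝ}, u ≤ v → f '' Icc u v = segment ℝ (f u) (f v) := fun huv => by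
    rw [← segment_eq_Icc huv, image_segment]
  have hfa : f 0 = a := AffineMap.lineMap_apply_zero a b
  have hfb : f 1 = b := AffineMap.lineMap_apply_one a b
  obtain ⟨u, ⟨⟨hu0, hu1⟩, hfu⟩, hleast⟩ : ∃ u, IsLeast (Icc 0 1 ∩ f ⁻¹' T) u := by
    refine (isCompact_Icc.inter_right (hT.preimage AffineMap.lineMap_continuous)).exists_isLeast ?_
    obtain ⟨x, hx, hxT⟩ := hne
    rw [segment_eq_image_lineMap] at hx
    obtain ⟨v, hv, rfl⟩ := hx
    exact ⟨v, hv, hxT⟩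
  refine ⟨f u, hfu, ?_, ?_⟩
  · rw [← hfa, ← hfb, ← hf zero_le_one, ← hf hu0, ← hf hu1, ← image_union,
      Icc_union_Icc_eq_Icc hu0 hu1]
  · rw [← hfa, ← hf hu0]
    rintro _ ⟨v, ⟨hv0, hvu⟩, rfl⟩ hvu' hvT
    exact hvu' (congrArg f (le_antisymm hvu (hleast ⟨⟨hv0, hvu.trans hu1⟩, hvT⟩)))

theorem exists_segment_eq_union_segment_subset {T : Set E} (hT : IsClosed T) (hTc : Convex ℝ T)
    {a b : E} (hne : (segment ℝ a b ∩ T).Nonempty) :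
    ∃ c d, segment ℝ a b = segment ℝ a c ∪ segment ℝ c d ∪ segment ℝ d b ∧
      segment ℝ c d ⊆ T ∧ (∀ x ∈ segment ℝ a c, x ≠ c → x ∉ T) ∧
      ∀ x ∈ segment ℝ b d, x ≠ d → x ∉ T := by
  obtain ⟨c, hcT, hac, houtc⟩ := exists_first_mem_segment hT hne
  obtain ⟨d, hdT, hbd, houtd⟩ :=
    exists_first_mem_segment hT (a := b) (b := c) ⟨c, right_mem_segment ℝ b c, hcT⟩
  refine ⟨c, d, ?_, hTc.segment_subset hcT hdT, houtc, houtd⟩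
  rw [hac, segment_symm ℝ c b, hbd, segment_symm ℝ b d, segment_symm ℝ d c, union_assoc,
    union_comm (segment ℝ d b)]

theorem notMem_interior_of_segment {T : Set E} {a c : E} (hac : a ≠ c)
    (hout : ∀ x ∈ segment ℝ a c, x ≠ c → x ∉ T) : c ∉ interior T := by
  have hopen : openSegment ℝ a c ⊆ Tᶜ := fun x hx =>
    hout x (openSegment_subset_segment ℝ a c hx) (by
      rintro rfl
      exact hac (right_mem_openSegment_iff.1 hx))
  rw [← mem_compl_iff, ← closure_compl]
  exact closure_mono hopen (segment_subset_closure_openSegment (right_mem_segment ℝ a c))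

theorem image_segment_eq_segment {T : Set E} {F : E → E} (hfix : ∀ x ∉ interior T, F x = x)
    {a c : E} (hout : ∀ x ∈ segment ℝ a c, x ≠ c → x ∉ T) :
    F '' segment ℝ a c = segment ℝ (F a) (F c) := by
  obtain rfl | hac := eq_or_ne a c
  · simp [segment_same]
  have hid : EqOn F id (segment ℝ a c) := by
    intro x hx
    obtain rfl | hxc := eq_or_ne x c
    · exact hfix x (notMem_interior_of_segment hac hout)
    · exact hfix x fun hxT => hout x hx hxc (interior_subset hxT)
  rw [hid.image_eq_self, hid (left_mem_segment ℝ a c), hid (right_mem_segment ℝ a c), id, id]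

end Segment

theorem isPLOfAtMost_add_two_image_segment {m : ℕ} {T : Set ℝ³} (hT : IsClosed T)
    (hTc : Convex ℝ T) {F : ℝ³ → ℝ³} (hfix : ∀ x ∉ interior T, F x = x)
    (hF : ∀ a b, segment ℝ a b ⊆ T → IsPLOfAtMost m (F '' segment ℝ a b)) (a b : ℝ³) :
    IsPLOfAtMost (m + 2) (F '' segment ℝ a b) := by
  by_cases hne : (segment ℝ a b ∩ T).Nonempty
  · obtain ⟨c, d, hab, hcd, hac, hbd⟩ := exists_segment_eq_union_segment_subset hT hTc hne
    rw [hab, image_union, image_union, image_segment_eq_segment hfix hac, segment_symm ℝ d b,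
      image_segment_eq_segment hfix hbd]
    exact (((isPLOfAtMost_one_segment _ _).union (hF c d hcd)).union
      (isPLOfAtMost_one_segment _ _)).mono (by omega)
  · have hid : EqOn F id (segment ℝ a b) := fun x hx =>
      hfix x fun hxT => hne ⟨x, hx, interior_subset hxT⟩
    rw [hid.image_eq_self]
    exact (isPLOfAtMost_one_segment a b).mono (by omega)

open Classical in
theorem isPLOfAtMost_add_two_image_segment_extend {m : ℕ} {B : Set ℝ³} (hB : IsClosed B)
    (hBc : Convex ℝ B) {h : ℝ³ → ℝ³} (hfix : ∀ x ∈ frontier B, h x = x)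
    (hstraight : ∀ a b, segment ℝ a b ⊆ B → IsPLOfAtMost m (h '' segment ℝ a b)) (a b : ℝ³) :
    IsPLOfAtMost (m + 2) ((fun x => if x ∈ B then h x else x) '' segment ℝ a b) := by
  refine isPLOfAtMost_add_two_image_segment hB hBc (fun x hx => ?_) (fun a b hab => ?_) a b
  · by_cases hxB : x ∈ B
    · simpa only [if_pos hxB] using hfix x ⟨subset_closure hxB, hx⟩
    · simp only [if_neg hxB]
  · rw [image_congr fun x hx => if_pos (hab hx)]
    exact hstraight a b hab

open Classical in
theorem stmt_5_general (B : Set (EuclideanSpace ℝ (Fin 3))) (hBconv : Convex ℝ B)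
    (hBcomp : IsCompact B)
    (h : EuclideanSpace ℝ (Fin 3) → EuclideanSpace ℝ (Fin 3))
    (hfix : ∀ x ∈ frontier B, h x = x)
    (p : EuclideanSpace ℝ (Fin 3))
    (s : ℝ → EuclideanSpace ℝ (Fin 3) → EuclideanSpace ℝ (Fin 3))
    (hs : ∀ r x, s r x = r • (x - p) + p)
    (g : ℝ → EuclideanSpace ℝ (Fin 3) → EuclideanSpace ℝ (Fin 3))
    (hg : ∀ r x, g r x = s r (h (s r⁻¹ x)))
    (H : ℝ → EuclideanSpace ℝ (Fin 3) → EuclideanSpace ℝ (Fin 3))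
    (hH : ∀ t x, H t x = if x ∈ s t '' B then g t x else x)
    (m : ℕ)
    (hstraight : ∀ a b, segment ℝ a b ⊆ B → IsPLOfAtMost m (h '' segment ℝ a b)) :
    ∀ t ∈ Set.Ioc (0 : ℝ) 1, ∀ a b, segment ℝ a b ⊆ B →
      IsPLOfAtMost (m + 2) (H t '' segment ℝ a b) := by
  rintro t ⟨ht, -⟩ a b -
  set φ : ℝ³ ≃ᵃ[ℝ] ℝ³ := AffineEquiv.homothetyUnitsMulHom p (Units.mk0 t ht.ne')
  have hφ : s t = φ := funext fun x => by simp [φ, hs, AffineMap.homothety_apply]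
  have hφsymm : s t⁻¹ = φ.symm := funext fun x => by simp [φ, hs, AffineMap.homothety_apply]
  have hBt : s t '' B = φ.symm ⁻¹' B := by rw [hφ, ← φ.symm.image_symm]; rfl
  have hHt : H t = φ ∘ (fun x => if x ∈ B then h x else x) ∘ φ.symm := by
    funext x
    by_cases hx : φ.symm x ∈ B
    · rw [hH, hBt, if_pos (mem_preimage.2 hx), hg, hφ, hφsymm]
      simp only [Function.comp_apply, if_pos hx]
    · rw [hH, hBt, if_neg (mt mem_preimage.1 hx)]
      simp only [Function.comp_apply, if_neg hx, φ.apply_symm_apply]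
  rw [hHt]
  exact isPLOfAtMost_image_segment_conj
    (isPLOfAtMost_add_two_image_segment_extend hBcomp.isClosed hBconv hfix hstraight) φ a b

open Classical in
/-- Alexander trick arc count: if `h` sends straight arcs in `B` to at most `m`
straight arcs, then each `h_t` sends straight arcs to at most `m + 2` straight arcs. -/
theorem stmt_5 (B : Set (EuclideanSpace ℝ (Fin 3))) (hBconv : Convex ℝ B)
    (hBcomp : IsCompact B)
    (h : EuclideanSpace ℝ (Fin 3) → EuclideanSpace ℝ (Fin 3))
    (hcont : ContinuousOn h B) (hmaps : Set.MapsTo h B B)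
    (hfix : ∀ x ∈ frontier B, h x = x)
    (p : EuclideanSpace ℝ (Fin 3)) (hp : p ∈ interior B)
    (s : ℝ → EuclideanSpace ℝ (Fin 3) → EuclideanSpace ℝ (Fin 3))
    (hs : ∀ r x, s r x = r • (x - p) + p)
    (g : ℝ → EuclideanSpace ℝ (Fin 3) → EuclideanSpace ℝ (Fin 3))
    (hg : ∀ r x, g r x = s r (h (s r⁻¹ x)))
    (H : ℝ → EuclideanSpace ℝ (Fin 3) → EuclideanSpace ℝ (Fin 3))
    (hH : ∀ t x, H t x = if x ∈ s t '' B then g t x else x)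
    (m : ℕ)
    (hstraight : ∀ a b, segment ℝ a b ⊆ B → IsPLOfAtMost m (h '' segment ℝ a b)) :
    ∀ t ∈ Set.Ioc (0 : ℝ) 1, ∀ a b, segment ℝ a b ⊆ B →
      IsPLOfAtMost (m + 2) (H t '' segment ℝ a b) :=
  stmt_5_general B hBconv hBcomp h hfix p s hs g hg H hH m hstraight
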